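/- arXiv:1702.06290 — 2 statements merged into one kernel-verified Lean document; each statement's English description precedes it below -/
import Mathlib

section
/- For every monomial τ = t_{i_1}^{k_1} t_{i_2}^{k_2} ⋯ t_{i_r}^{k_r} in H_{1,n}(q), where 0 ≤ i_1 < i_2 < ⋯ < i_r ≤ n−1 and k_1, …, k_r ∈ ℤ∖{0} (so τ may have gaps in its indices), there exist finitely many monomials τ_i ∈ Λ^{aug} and elements β_i ∈ H_n(q) such that τ ≐ Σ_i τ_i β_i, i.e. τ − Σ_i τ_i β_i lies in the R-submodule of H_{1,n}(q) spanned by all commutators ab − ba (a, b ∈ H_{1,n}(q)). -/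
set_option synthInstance.maxHeartbeats 1000000
set_option maxHeartbeats 2000000

namespace MB

/-! ## The mixed braid group `B_{1,n}` (with `m = n - 1` braiding generators) -/

/-- Generators: `none` is the looping generator `t`, `some i` is `σ_{i+1}` for `i : Fin m`. -/
abbrev MBGen (m : ℕ) := Option (Fin m)

/-- The relators of the mixed braid group `B_{1,n}` (`m = n-1`):
`σ₁tσ₁t = tσ₁tσ₁`; `tσ_i = σ_i t` for `i > 1`; the braid relations among the `σ_i`. -/
def rels (m : ℕ) : Set (FreeGroup (MBGen m)) :=
  { r | (∃ h : 0 < m,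
          r = (FreeGroup.of (some ⟨0, h⟩) * FreeGroup.of none) ^ 2 *
              ((FreeGroup.of (none : MBGen m) * FreeGroup.of (some ⟨0, h⟩)) ^ 2)⁻¹) ∨
        (∃ i : Fin m, 1 ≤ (i : ℕ) ∧
          r = FreeGroup.of (none : MBGen m) * FreeGroup.of (some i) *
              (FreeGroup.of (some i) * FreeGroup.of (none : MBGen m))⁻¹) ∨
        (∃ i j : Fin m, (i : ℕ) + 1 = (j : ℕ) ∧
          r = FreeGroup.of (some i) * FreeGroup.of (some j) * FreeGroup.of (some i) *
              (FreeGroup.of (some j) * FreeGroup.of (some i) * FreeGroup.of (some j))⁻¹) ∨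
        (∃ i j : Fin m, (i : ℕ) + 1 < (j : ℕ) ∧
          r = FreeGroup.of (some i) * FreeGroup.of (some j) *
              (FreeGroup.of (some j) * FreeGroup.of (some i))⁻¹) }

/-- The mixed braid group `B_{1,n}` with `n = m+1` moving strands. -/
abbrev B (m : ℕ) := PresentedGroup (rels m)

/-- The braiding generator `σ_{i+1}`, for `i : Fin m`. -/
def σ {m : ℕ} (i : Fin m) : B m := PresentedGroup.of (some i)

/-- The looping generator `t`. -/
def τ {m : ℕ} : B m := PresentedGroup.of none

/-- `σ_j` in one-based indexing (`1 ≤ j ≤ m`), junk value `1` out of range. -/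
def sig {m : ℕ} (j : ℕ) : B m :=
  if h : 1 ≤ j ∧ j - 1 < m then σ ⟨j - 1, h.2⟩ else 1

/-- The looping elements `t_i = σ_i ⋯ σ_1 t σ_1 ⋯ σ_i` (for `0 ≤ i ≤ m`), via `t_0 = t`,
`t_{j+1} = σ_{j+1} t_j σ_{j+1}`. -/
def tt {m : ℕ} : ℕ → B m
  | 0 => τ
  | (j+1) => sig (j+1) * tt j * sig (j+1)

/-- The looping elements `t′_i = σ_i ⋯ σ_1 t σ_1⁻¹ ⋯ σ_i⁻¹` (for `0 ≤ i ≤ m`), via `t′_0 = t`,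
`t′_{j+1} = σ_{j+1} t′_j σ_{j+1}⁻¹`. -/
def tp {m : ℕ} : ℕ → B m
  | 0 => τ
  | (j+1) => sig (j+1) * tp j * (sig (j+1))⁻¹

/-! ## The generalized Iwahori–Hecke algebra of type B, `H_{1,n}(q)` -/

/-- The ground ring `R = ℂ[q^{±1}]` of Laurent polynomials. -/
abbrev R : Type := LaurentPolynomial ℂ

instance : IsDomain R := NoZeroDivisors.to_isDomain _

/-- The variable `q ∈ R`. -/
noncomputable def qq : R := LaurentPolynomial.T 1

/-- The quadratic Hecke relations `σ_i² = (q-1)σ_i + q`. -/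
inductive heckeRel (m : ℕ) :
    MonoidAlgebra R (B m) → MonoidAlgebra R (B m) → Prop
  | quad (i : Fin m) : heckeRel m
      (MonoidAlgebra.of R (B m) (σ i) * MonoidAlgebra.of R (B m) (σ i))
      ((qq - 1) • MonoidAlgebra.of R (B m) (σ i) + qq • (1 : MonoidAlgebra R (B m)))

/-- The generalized Iwahori–Hecke algebra of type B, `H_{1,n}(q)` (`n = m+1`), as the quotient
of the group algebra `R[B_{1,n}]` by the two-sided ideal generated by the quadratic relations. -/
abbrev H (m : ℕ) := RingQuot (heckeRel m)

/-- The canonical multiplicative map `π : B_{1,n} → H_{1,n}(q)`. -/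
noncomputable def pih (m : ℕ) : B m →* H m :=
  (RingQuot.mkRingHom (heckeRel m)).toMonoidHom.comp (MonoidAlgebra.of R (B m))

/-- The subalgebra `H_n(q)` of `H_{1,n}(q)` generated by the images `g_1, …, g_{n-1}`
of `σ_1, …, σ_{n-1}`. -/
noncomputable def HA (m : ℕ) : Subalgebra R (H m) :=
  Algebra.adjoin R (Set.range fun i : Fin m => pih m (σ i))

/-- The monomial `t^{k_0} t_1^{k_1} ⋯ t_{ℓ-1}^{k_{ℓ-1}}` with consecutive indices
(an element of `Λ^{aug}` when all exponents are nonzero). -/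
def augWord {m : ℕ} (ℓ : ℕ) (k : Fin ℓ → ℤ) : B m :=
  (List.ofFn fun j => tt (j : ℕ) ^ k j).prod

section Rels
variable {m : ℕ}
private def fmap (m : ℕ) : FreeGroup (MBGen m) →* B m := QuotientGroup.mk' _
private lemma fmap_of (x : MBGen m) : fmap m (FreeGroup.of x) = PresentedGroup.of x := rfl
private lemma fmap_rel {r : FreeGroup (MBGen m)} (h : r ∈ rels m) : fmap m r = 1 :=
  (QuotientGroup.eq_one_iff r).mpr (Subgroup.subset_normalClosure h)
lemma braid_σ (i j : Fin m) (h : (i : ℕ) + 1 = j) :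
    σ i * σ j * σ i = σ j * σ i * σ j := by
  have h1 := fmap_rel (m := m) (Or.inr (Or.inr (Or.inl ⟨i, j, h, rfl⟩)))
  rw [map_mul, map_inv, mul_inv_eq_one] at h1
  simpa only [map_mul, fmap_of, σ] using h1
lemma tau_comm_σ (i : Fin m) (h : 1 ≤ (i : ℕ)) : τ * σ i = σ i * τ := by
  have h1 := fmap_rel (m := m) (Or.inr (Or.inl ⟨i, h, rfl⟩))
  rw [map_mul, map_inv, mul_inv_eq_one] at h1
  simpa only [map_mul, fmap_of, σ, τ] using h1
lemma far_σ (i j : Fin m) (h : (i : ℕ) + 1 < j) : σ i * σ j = σ j * σ i := by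
  have h1 := fmap_rel (m := m) (Or.inr (Or.inr (Or.inr ⟨i, j, h, rfl⟩)))
  rw [map_mul, map_inv, mul_inv_eq_one] at h1
  simpa only [map_mul, fmap_of, σ] using h1
lemma b2_σ (h : 0 < m) : (σ ⟨0, h⟩ * τ) * (σ ⟨0, h⟩ * τ) = ((τ : B m) * σ ⟨0, h⟩) * (τ * σ ⟨0, h⟩) := by
  have h1 := fmap_rel (m := m) (Or.inl ⟨h, rfl⟩)
  rw [map_mul, map_inv, mul_inv_eq_one] at h1
  simpa only [map_pow, map_mul, fmap_of, σ, τ, pow_two] using h1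
end Rels

/- ## sig-level lemmas -/
section Sig
variable {m : ℕ}

lemma sig_out {j : ℕ} (h : ¬(1 ≤ j ∧ j - 1 < m)) : (sig j : B m) = 1 := dif_neg h

lemma sig_in {j : ℕ} (h1 : 1 ≤ j) (h2 : j - 1 < m) : (sig j : B m) = σ ⟨j - 1, h2⟩ :=
  dif_pos ⟨h1, h2⟩

lemma sig_braid {j : ℕ} (h1 : 1 ≤ j) (h2 : j + 1 ≤ m) :
    (sig j : B m) * sig (j+1) * sig j = sig (j+1) * sig j * sig (j+1) := by
  rw [sig_in h1 (by omega), sig_in (by omega) (by omega)]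
  exact braid_σ _ _ (by simp; omega)

lemma tau_sig_comm {j : ℕ} (h : 2 ≤ j) : (τ : B m) * sig j = sig j * τ := by
  by_cases hj : j - 1 < m
  · rw [sig_in (by omega) hj]
    exact tau_comm_σ _ (by simp; omega)
  · rw [sig_out (fun hc => hj hc.2)]; simp

lemma sig_far_comm {j j' : ℕ} (h1 : 1 ≤ j) (h : j + 2 ≤ j') :
    (sig j : B m) * sig j' = sig j' * sig j := by
  by_cases hj : j - 1 < m
  · by_cases hj' : j' - 1 < m
    · rw [sig_in h1 hj, sig_in (by omega) hj']
      exact far_σ _ _ (by simp; omega)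
    · rw [sig_out (fun hc => hj' hc.2)]; simp
  · rw [sig_out (fun hc => hj hc.2)]; simp

lemma tau_braid : (τ : B m) * sig 1 * τ * sig 1 = sig 1 * τ * sig 1 * τ := by
  by_cases hm : 0 < m
  · rw [sig_in (by omega) (by omega : 1 - 1 < m)]
    have e := b2_σ (m := m) hm
    simp only [mul_assoc] at e ⊢
    exact e.symm
  · rw [sig_out (by omega)]; simp
end Sig

/- ## abstract group rewriting helpers -/
section Aux
variable {G : Type*} [Group G]

private lemma ext_mul {a b : G} (h : a = b) (w : G) : a * w = b * w := by rw [h]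

private lemma braid_comm_aux (s s' u : G)
    (hb : s * s' * s = s' * s * s') (hu : u * s' = s' * u) :
    Commute s (s' * (s * u * s) * s') := by
  have hbw : ∀ w, s * (s' * (s * w)) = s' * (s * (s' * w)) := fun w => by
    simpa [mul_assoc] using ext_mul hb w
  have huw : ∀ w, s' * (u * w) = u * (s' * w) := fun w => by
    simpa [mul_assoc] using ext_mul hu.symm w
  have h2 : s' * (s * s') = s * (s' * s) := by simpa [mul_assoc] using hb.symm
  show s * (s' * (s * u * s) * s') = s' * (s * u * s) * s' * s
  simp only [mul_assoc]
  rw [hbw, huw, h2]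

private lemma q_aux (s s0 u : G)
    (hb : s0 * s * s0 = s * s0 * s) (hu : u * s = s * u)
    (hq : u * s0 * u * s0 = s0 * u * s0 * u) :
    (s0 * u * s0) * s * (s0 * u * s0) * s = s * (s0 * u * s0) * s * (s0 * u * s0) := by
  have hbw : ∀ w, s0 * (s * (s0 * w)) = s * (s0 * (s * w)) := fun w => by
    simpa [mul_assoc] using ext_mul hb w
  have hb3 : s0 * (s * s0) = s * (s0 * s) := by simpa [mul_assoc] using hb
  have huw : ∀ w, u * (s * w) = s * (u * w) := fun w => by
    simpa [mul_assoc] using ext_mul hu w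
  have hqw : ∀ w, u * (s0 * (u * (s0 * w))) = s0 * (u * (s0 * (u * w))) := fun w => by
    simpa [mul_assoc] using ext_mul hq w
  simp only [mul_assoc]
  rw [hbw, huw, ← huw (s0 * s), ← hb3, hqw, hbw, ← huw, hbw, ← huw s0]
end Aux

/- ## commutation of sig with tt, and tt with tt -/
section Comm
variable {m : ℕ}

lemma sig_tt_comm : ∀ i, i ≤ m → ∀ j, 1 ≤ j → (j + 1 ≤ i ∨ i + 2 ≤ j) →
    Commute (sig j : B m) (tt i) := by
  intro i
  induction i using Nat.strong_induction_on with
  | _ i IH =>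
    match i with
    | 0 =>
      intro _ j hj hcase
      have h2 : 2 ≤ j := by omega
      have : (τ : B m) * sig j = sig j * τ := tau_sig_comm h2
      exact (Commute.symm this : Commute (sig j : B m) τ)
    | (i+1) =>
      intro hi j hj hcase
      show Commute (sig j) (sig (i+1) * tt i * sig (i+1))
      rcases hcase with hle | hge
      · -- j ≤ i
        by_cases hji : j = i
        · subst hji
          -- braid case: i = j ≥ 1
          obtain ⟨i', rfl⟩ : ∃ i', j = i' + 1 := ⟨j - 1, by omega⟩
          show Commute (sig (i'+1)) (sig (i'+2) * tt (i'+1) * sig (i'+2))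
          have hb : (sig (i'+1) : B m) * sig (i'+2) * sig (i'+1)
              = sig (i'+2) * sig (i'+1) * sig (i'+2) := sig_braid (by omega) (by omega)
          have hu : (tt i' : B m) * sig (i'+2) = sig (i'+2) * tt i' :=
            ((IH i' (by omega) (by omega) (i'+2) (by omega) (Or.inr (by omega))).symm).eq
          have := braid_comm_aux (sig (i'+1) : B m) (sig (i'+2)) (tt i') hb hu
          simpa [tt] using this
        · have hji' : j + 1 ≤ i := by omega
          have c1 : Commute (sig j : B m) (sig (i+1)) :=
            sig_far_comm hj (by omega)
          have c2 : Commute (sig j : B m) (tt i) :=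
            IH i (by omega) (by omega) j hj (Or.inl hji')
          exact (c1.mul_right c2).mul_right c1
      · -- i + 3 ≤ j
        have c1 : Commute (sig j : B m) (sig (i+1)) :=
          (sig_far_comm (by omega) (by omega : (i+1) + 2 ≤ j)).symm
        have c2 : Commute (sig j : B m) (tt i) :=
          IH i (by omega) (by omega) j hj (Or.inr (by omega))
        exact (c1.mul_right c2).mul_right c1

lemma tt_braid : ∀ l, l ≤ m →
    (tt l : B m) * sig (l+1) * tt l * sig (l+1) = sig (l+1) * tt l * sig (l+1) * tt l := by
  intro l
  induction l with
  | zero =>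
    intro _
    exact tau_braid
  | succ l IH =>
    intro hl
    by_cases hup : l + 2 ≤ m
    · have hb : (sig (l+1) : B m) * sig (l+2) * sig (l+1)
          = sig (l+2) * sig (l+1) * sig (l+2) := sig_braid (by omega) (by omega)
      have hu : (tt l : B m) * sig (l+2) = sig (l+2) * tt l :=
        ((sig_tt_comm l (by omega) (l+2) (by omega) (Or.inr (by omega))).symm).eq
      have hq := IH (by omega)
      have := q_aux (sig (l+2) : B m) (sig (l+1)) (tt l) hb hu hq
      simpa [tt] using this
    · have h1 : (sig (l+1+1) : B m) = 1 := sig_out (by omega)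
      simp [h1]

lemma tt_comm (i l : ℕ) (hi : i ≤ m) (hl : l ≤ m) : Commute (tt i : B m) (tt l) := by
  have key : ∀ l, l ≤ m → ∀ i, i < l → Commute (tt i : B m) (tt l) := by
    intro l
    induction l using Nat.strong_induction_on with
    | _ l IH =>
      match l with
      | 0 => intro _ i hi; omega
      | (l+1) =>
        intro hl i hil
        show Commute (tt i) (sig (l+1) * tt l * sig (l+1))
        by_cases hc : i = l
        · subst hc
          have hb := tt_braid (m := m) i (by omega)
          show (tt i : B m) * (sig (i+1) * tt i * sig (i+1))
              = sig (i+1) * tt i * sig (i+1) * tt i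
          simp only [mul_assoc] at hb ⊢
          exact hb
        · have c1 : Commute (tt i : B m) (sig (l+1)) :=
            (sig_tt_comm i (by omega) (l+1) (by omega) (Or.inr (by omega))).symm
          have c2 : Commute (tt i : B m) (tt l) := IH l (by omega) (by omega) i (by omega)
          exact (c1.mul_right c2).mul_right c1
  rcases lt_trichotomy i l with h | h | h
  · exact key l hl i h
  · subst h; exact Commute.refl _
  · exact (key i hi l h).symm

end Comm

/- ## Hecke algebra basics -/
section Hecke
variable {m : ℕ}

noncomputable def qi : R := LaurentPolynomial.T (-1)

lemma qq_qi : qq * qi = 1 := by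
  rw [qq, qi, ← LaurentPolynomial.T_add]
  norm_num

lemma pih_def (x : B m) :
    pih m x = RingQuot.mkAlgHom R (heckeRel m) (MonoidAlgebra.of R (B m) x) := by
  show RingQuot.mkRingHom (heckeRel m) (MonoidAlgebra.of R (B m) x) = _
  rw [← RingQuot.mkAlgHom_coe R]
  rfl

lemma quad_g (i : Fin m) :
    pih m (σ i) * pih m (σ i) = (qq - 1) • pih m (σ i) + qq • 1 := by
  have h := RingQuot.mkAlgHom_rel R (heckeRel.quad i)
  simp only [map_mul, map_add, map_smul, map_one] at h
  rw [pih_def]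
  exact h

lemma quad_sig {j : ℕ} (h1 : 1 ≤ j) (h2 : j ≤ m) :
    pih m (sig j) * pih m (sig j) = (qq - 1) • pih m (sig j) + qq • 1 := by
  rw [sig_in h1 (by omega)]
  exact quad_g _

lemma pih_inv_mul {x : B m} : pih m (x⁻¹) * pih m x = 1 := by
  rw [← map_mul]; simp

lemma pih_mul_inv {x : B m} : pih m x * pih m (x⁻¹) = 1 := by
  rw [← map_mul]; simp

lemma quad_sig_inv {j : ℕ} (h1 : 1 ≤ j) (h2 : j ≤ m) :
    pih m ((sig j)⁻¹) * pih m ((sig j)⁻¹) = (qi - 1) • pih m ((sig j)⁻¹) + qi • 1 := by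
  set g := pih m (sig j)
  set γ := pih m ((sig j)⁻¹)
  have hγg : γ * g = 1 := pih_inv_mul
  have hgγ : g * γ = 1 := pih_mul_inv
  have h1' : (1 : H m) = (qq - 1) • γ + qq • (γ * γ) := by
    have h := quad_sig (m := m) h1 h2
    calc (1 : H m) = γ * (g * g) * γ := by
          rw [show γ * (g * g) * γ = (γ * g) * (g * γ) by simp only [mul_assoc], hγg, hgγ, one_mul]
      _ = γ * ((qq - 1) • g + qq • 1) * γ := by rw [h]
      _ = (qq - 1) • (γ * g * γ) + qq • (γ * γ) := by
          simp only [mul_add, add_mul, mul_smul_comm, smul_mul_assoc, mul_one]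
      _ = (qq - 1) • γ + qq • (γ * γ) := by rw [hγg, one_mul]
  have hsub : qq • (γ * γ) = 1 - (qq - 1) • γ := by
    rw [h1']; abel
  calc γ * γ = (qi * qq) • (γ * γ) := by rw [mul_comm qi qq, qq_qi, one_smul]
    _ = qi • (qq • (γ * γ)) := by rw [mul_smul]
    _ = qi • ((1 : H m) - (qq - 1) • γ) := by rw [hsub]
    _ = qi • 1 - qi • ((qq - 1) • γ) := smul_sub qi 1 ((qq - 1) • γ)
    _ = qi • 1 - (qi * (qq - 1)) • γ := by rw [smul_smul]
    _ = qi • 1 - (1 - qi) • γ := by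
        rw [show qi * (qq - 1) = 1 - qi from by rw [mul_sub, mul_comm qi qq, qq_qi, mul_one]]
    _ = (qi - 1) • γ + qi • 1 := by module

lemma sig_mem (j : ℕ) : pih m (sig j) ∈ HA m := by
  by_cases h : 1 ≤ j ∧ j - 1 < m
  · rw [sig_in h.1 h.2]
    exact Algebra.subset_adjoin ⟨⟨j - 1, h.2⟩, rfl⟩
  · rw [show (sig j : B m) = 1 from dif_neg h, map_one]
    exact one_mem _

lemma sig_inv_mem {j : ℕ} (h1 : 1 ≤ j) (h2 : j ≤ m) : pih m ((sig j)⁻¹) ∈ HA m := by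
  set g := pih m (sig j) with hg
  set γ := pih m ((sig j)⁻¹)
  have h := quad_sig (m := m) h1 h2
  have h2' : g = (qq - 1) • 1 + qq • γ := by
    calc g = (g * g) * γ := by rw [mul_assoc, pih_mul_inv, mul_one]
      _ = ((qq - 1) • g + qq • 1) * γ := by rw [h]
      _ = (qq - 1) • (g * γ) + qq • γ := by
          simp only [add_mul, smul_mul_assoc, one_mul]
      _ = (qq - 1) • 1 + qq • γ := by rw [pih_mul_inv]
  have e2 : γ = qi • g + (qi - 1) • 1 := by
    rw [h2', smul_add, smul_smul, smul_smul,
        show qi * (qq - 1) = 1 - qi from by rw [mul_sub, mul_comm qi qq, qq_qi, mul_one],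
        show qi * qq = 1 from by rw [mul_comm]; exact qq_qi, one_smul]
    module
  rw [e2]
  exact add_mem (Subalgebra.smul_mem (HA m) (sig_mem (m := m) j) qi)
    (Subalgebra.smul_mem (HA m) (one_mem (HA m)) (qi - 1))

/- ## the power formula -/
lemma power_formula {A : Type*} [Ring A] [Algebra R A] (c d : R) (g t T : A)
    (hg : g * g = c • g + d • 1) (hT : T = g * t * g) :
    ∀ n : ℕ, T ^ (n+1) = d ^ n • (g * t ^ (n+1) * g)
      + c • ∑ j ∈ Finset.range n, d ^ j • (T ^ (n-j) * (t ^ (j+1) * g)) := by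
  have hgw : ∀ w : A, g * (g * w) = c • (g * w) + d • w := by
    intro w
    calc g * (g * w) = (g * g) * w := by rw [mul_assoc]
      _ = (c • g + d • 1) * w := by rw [hg]
      _ = c • (g * w) + d • w := by rw [add_mul, smul_mul_assoc, smul_mul_assoc, one_mul]
  have key : ∀ k : ℕ, T * (g * (t ^ k * g)) = c • (T * (t ^ k * g)) + d • (g * (t ^ (k+1) * g)) := by
    intro k
    rw [hT]
    calc (g * t * g) * (g * (t ^ k * g)) = g * (t * (g * (g * (t ^ k * g)))) := by
          simp only [mul_assoc]
      _ = g * (t * (c • (g * (t ^ k * g)) + d • (t ^ k * g))) := by rw [hgw]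
      _ = c • (g * (t * (g * (t ^ k * g)))) + d • (g * (t * (t ^ k * g))) := by
          simp only [mul_add, mul_smul_comm]
      _ = c • ((g * t * g) * (t ^ k * g)) + d • (g * (t ^ (k+1) * g)) := by
          simp only [mul_assoc, pow_succ']
  intro n
  induction n with
  | zero => simp [hT]
  | succ n IH =>
    have h1 : T ^ (n+1+1) = T * T ^ (n+1) := pow_succ' T (n+1)
    rw [h1, IH, mul_add, mul_smul_comm, mul_smul_comm, Finset.mul_sum]
    rw [show g * t ^ (n+1) * g = g * (t ^ (n+1) * g) from mul_assoc g _ g, key (n+1)]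
    have hsum : ∀ j ∈ Finset.range n,
        T * (d ^ j • (T ^ (n-j) * (t ^ (j+1) * g))) = d ^ j • (T ^ (n+1-j) * (t ^ (j+1) * g)) := by
      intro j hj
      have hj' : j < n := Finset.mem_range.mp hj
      have e : n - j + 1 = n + 1 - j := by omega
      rw [mul_smul_comm, ← mul_assoc, ← pow_succ', e]
    rw [Finset.sum_congr rfl hsum, Finset.sum_range_succ,
        show n + 1 - n = 1 from by omega, pow_one,
        show g * t ^ (n+1+1) * g = g * (t ^ (n+1+1) * g) from mul_assoc g _ g]
    rw [smul_add, smul_smul, smul_smul, smul_add, pow_succ]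
    module

end Hecke

/- ## the target submodule -/
section SubM
variable {m : ℕ}

noncomputable def Cc (m : ℕ) : Submodule R (H m) :=
  Submodule.span R {x : H m | ∃ a b : H m, x = a * b - b * a}

def SgSet (m : ℕ) : Set (H m) :=
  {x : H m | ∃ (ℓ : ℕ) (k : Fin ℓ → ℤ) (β : H m),
    (ℓ ≤ m + 1 ∧ (∀ j, k j ≠ 0) ∧ β ∈ HA m) ∧ x = pih m (augWord ℓ k) * β}

noncomputable def Ss (m : ℕ) : Submodule R (H m) := Cc m ⊔ Submodule.span R (SgSet m)

lemma comm_mem_Ss (a b : H m) : a * b - b * a ∈ Ss m :=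
  Submodule.mem_sup_left (Submodule.subset_span ⟨a, b, rfl⟩)

lemma aug_mem (ℓ : ℕ) (k : Fin ℓ → ℤ) (β : H m) (h1 : ℓ ≤ m + 1)
    (h2 : ∀ j, k j ≠ 0) (hβ : β ∈ HA m) : pih m (augWord ℓ k) * β ∈ Ss m :=
  Submodule.mem_sup_right (Submodule.subset_span ⟨ℓ, k, β, ⟨h1, h2, hβ⟩, rfl⟩)

/- ## the reduction step -/
lemma step (m : ℕ) (W X Y P Q : B m) (c d : R) (n : ℕ)
    (hX : X = W * Y * W)
    (hq : pih m W * pih m W = c • pih m W + d • 1)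
    (hWP : Commute W P) (hWQ : Commute W Q) (hXY : Commute X Y)
    (hWmem : pih m W ∈ HA m)
    (hA : ∀ β' ∈ HA m, pih m (P * (Y ^ (n+1) * Q)) * β' ∈ Ss m)
    (hB : ∀ a b : ℕ, a + b = n + 1 → 1 ≤ a → 1 ≤ b →
        ∀ β' ∈ HA m, pih m (P * (Y ^ b * (X ^ a * Q))) * β' ∈ Ss m) :
    ∀ β ∈ HA m, pih m (P * (X ^ (n+1) * Q)) * β ∈ Ss m := by
  intro β hβ
  have hT : pih m X = pih m W * pih m Y * pih m W := by rw [hX]; simp [map_mul]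
  have hf := power_formula c d (pih m W) (pih m Y) (pih m X) hq hT n
  have expand : pih m (P * (X ^ (n+1) * Q)) * β
      = pih m P * (pih m X ^ (n+1) * (pih m Q * β)) := by
    simp only [map_mul, map_pow, mul_assoc]
  rw [expand, hf]
  have dist : pih m P * ((d ^ n • (pih m W * pih m Y ^ (n+1) * pih m W)
      + c • ∑ j ∈ Finset.range n, d ^ j • (pih m X ^ (n-j) * (pih m Y ^ (j+1) * pih m W)))
        * (pih m Q * β))
      = d ^ n • (pih m P * ((pih m W * pih m Y ^ (n+1) * pih m W) * (pih m Q * β)))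
      + c • ∑ j ∈ Finset.range n,
          d ^ j • (pih m P * ((pih m X ^ (n-j) * (pih m Y ^ (j+1) * pih m W)) * (pih m Q * β))) := by
    simp only [add_mul, mul_add, smul_mul_assoc, mul_smul_comm, Finset.sum_mul, Finset.mul_sum]
  rw [dist]
  apply Submodule.add_mem
  · apply Submodule.smul_mem
    have hg : P * (W * Y ^ (n+1) * W) * Q = W * (P * (Y ^ (n+1) * Q)) * W := by
      simp only [← mul_assoc]
      rw [← hWP.eq, mul_assoc (W * P * Y ^ (n+1)) W Q, hWQ.eq, ← mul_assoc]
    have e1 : pih m P * ((pih m W * pih m Y ^ (n+1) * pih m W) * (pih m Q * β))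
        = pih m W * (pih m (P * (Y ^ (n+1) * Q)) * (pih m W * β)) := by
      have h := congrArg (fun z => pih m z * β) hg
      simpa only [map_mul, map_pow, mul_assoc] using h
    rw [e1]
    have hV : (pih m (P * (Y ^ (n+1) * Q)) * (pih m W * β)) * pih m W ∈ Ss m := by
      have e2 : (pih m (P * (Y ^ (n+1) * Q)) * (pih m W * β)) * pih m W
          = pih m (P * (Y ^ (n+1) * Q)) * (pih m W * (β * pih m W)) := by
        simp only [mul_assoc]
      rw [e2]
      exact hA _ (mul_mem hWmem (mul_mem hβ hWmem))
    have e3 : pih m W * (pih m (P * (Y ^ (n+1) * Q)) * (pih m W * β))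
        = (pih m W * (pih m (P * (Y ^ (n+1) * Q)) * (pih m W * β))
            - (pih m (P * (Y ^ (n+1) * Q)) * (pih m W * β)) * pih m W)
          + (pih m (P * (Y ^ (n+1) * Q)) * (pih m W * β)) * pih m W := by
      abel
    rw [e3]
    exact Submodule.add_mem _ (comm_mem_Ss _ _) hV
  · apply Submodule.smul_mem
    apply Submodule.sum_mem
    intro j hj
    apply Submodule.smul_mem
    have hjn : j < n := Finset.mem_range.mp hj
    have hg2 : P * (X ^ (n-j) * (Y ^ (j+1) * W)) * Q = P * (Y ^ (j+1) * (X ^ (n-j) * Q)) * W := by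
      simp only [← mul_assoc]
      rw [mul_assoc (P * X ^ (n-j) * Y ^ (j+1)) W Q, hWQ.eq, ← mul_assoc,
          mul_assoc P (X ^ (n-j)) (Y ^ (j+1)), (hXY.pow_pow (n-j) (j+1)).eq, ← mul_assoc]
    have e4 : pih m P * ((pih m X ^ (n-j) * (pih m Y ^ (j+1) * pih m W)) * (pih m Q * β))
        = pih m (P * (Y ^ (j+1) * (X ^ (n-j) * Q))) * (pih m W * β) := by
      have h := congrArg (fun z => pih m z * β) hg2
      simpa only [map_mul, map_pow, mul_assoc] using h
    rw [e4]
    exact hB (n-j) (j+1) (by omega) (by omega) (by omega) _ (mul_mem hWmem hβ)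

end SubM

/- ## list product helpers -/
section ListHelp
variable {G : Type*} [Monoid G]

lemma prod_range_split (g : ℕ → G) (n i : ℕ) (h : i < n) :
    ((List.range n).map g).prod
      = ((List.range i).map g).prod
        * (g i * ((List.range (n-1-i)).map fun a => g (i+1+a)).prod) := by
  conv_lhs => rw [show n = i + 1 + (n-1-i) from by omega]
  rw [List.range_add, List.map_append, List.prod_append, List.range_succ,
      List.map_append, List.prod_append, List.map_map]
  simp [Function.comp_def, mul_assoc]

lemma prod_trunc (g : ℕ → G) (n ℓ : ℕ) (hℓ : ℓ ≤ n)
    (h : ∀ a, ℓ ≤ a → a < n → g a = 1) :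
    ((List.range n).map g).prod = ((List.range ℓ).map g).prod := by
  induction n with
  | zero => rw [Nat.le_zero.mp hℓ]
  | succ n IH =>
    by_cases hc : ℓ = n + 1
    · subst hc; rfl
    · rw [List.range_succ, List.map_append, List.prod_append]
      simp only [List.map_cons, List.map_nil, List.prod_cons, List.prod_nil]
      rw [h n (by omega) (by omega)]; rw [mul_one, mul_one]
      exact IH (by omega) (fun a ha han => h a ha (by omega))

lemma ofFn_eq_range_map {α : Type*} (g : ℕ → α) (ℓ : ℕ) :
    (List.ofFn fun j : Fin ℓ => g (j : ℕ)) = (List.range ℓ).map g := by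
  apply List.ext_getElem
  · simp
  · intro i h1 h2
    simp

end ListHelp

/- ## the monomial function representation -/
section Mono
variable {m : ℕ}

noncomputable def mono (m : ℕ) (f : ℕ → ℤ) : B m :=
  ((List.range (m+1)).map fun a => tt a ^ f a).prod

def meas (m : ℕ) (f : ℕ → ℤ) : ℕ :=
  ∑ a ∈ Finset.range (m+1), (f a).natAbs * (a+1)

lemma meas_update (f : ℕ → ℤ) (b : ℕ) (v : ℤ) (hb : b < m + 1) :
    meas m (Function.update f b v) + (f b).natAbs * (b+1)
      = meas m f + v.natAbs * (b+1) := by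
  classical
  have h1 : ∀ a ∈ Finset.range (m+1),
      ((Function.update f b v) a).natAbs * (a+1)
        = Function.update (fun a => (f a).natAbs * (a+1)) b (v.natAbs * (b+1)) a := by
    intro a _
    by_cases hab : a = b
    · subst hab; simp
    · simp [Function.update_of_ne hab]
  unfold meas
  rw [Finset.sum_congr rfl h1, Finset.sum_update_of_mem (Finset.mem_range.mpr hb),
      Finset.sum_eq_sum_sdiff_singleton_add (Finset.mem_range.mpr hb)
        (fun a => (f a).natAbs * (a+1))]
  omega

lemma mono_update2 (f : ℕ → ℤ) (i : ℕ) (hi : 1 ≤ i) (him : i ≤ m) (v w : ℤ) :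
    mono m (Function.update (Function.update f i v) (i-1) w)
      = (((List.range (i-1)).map fun a => (tt a : B m) ^ f a).prod)
        * ((tt (i-1) : B m) ^ w * ((tt i : B m) ^ v
          * (((List.range (m-i)).map fun a => (tt (i+1+a) : B m) ^ f (i+1+a)).prod))) := by
  classical
  set F := Function.update (Function.update f i v) (i-1) w with hF
  have hFi : F i = v := by
    rw [hF, Function.update_of_ne (by omega), Function.update_self]
  have hFi1 : F (i-1) = w := by rw [hF, Function.update_self]
  have hFlow : ∀ a, a < i - 1 → F a = f a := fun a ha => by
    rw [hF, Function.update_of_ne (by omega), Function.update_of_ne (by omega)]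
  have hFhigh : ∀ a, i < a → F a = f a := fun a ha => by
    rw [hF, Function.update_of_ne (by omega), Function.update_of_ne (by omega)]
  rw [mono, prod_range_split (fun a => (tt a : B m) ^ F a) (m+1) i (by omega),
      prod_range_split (fun a => (tt a : B m) ^ F a) i (i-1) (by omega),
      show i - 1 - (i-1) = 0 from by omega, show m + 1 - 1 - i = m - i from by omega]
  simp only [List.range_zero, List.map_nil, List.prod_nil, mul_one]
  have e1 : ((List.range (i-1)).map fun a => (tt a : B m) ^ F a)
      = ((List.range (i-1)).map fun a => (tt a : B m) ^ f a) :=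
    List.map_congr_left (fun a ha => by rw [hFlow a (List.mem_range.mp ha)])
  have e2 : ((List.range (m-i)).map fun a => (tt (i+1+a) : B m) ^ F (i+1+a))
      = ((List.range (m-i)).map fun a => (tt (i+1+a) : B m) ^ f (i+1+a)) :=
    List.map_congr_left (fun a ha => by rw [hFhigh (i+1+a) (by omega)])
  rw [e1, e2, hFi, hFi1]
  simp only [mul_assoc]

lemma mono_eq_self (f : ℕ → ℤ) (i : ℕ) (hi : 1 ≤ i) (him : i ≤ m) (hfim : f (i-1) = 0) :
    mono m f
      = (((List.range (i-1)).map fun a => (tt a : B m) ^ f a).prod)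
        * ((tt i : B m) ^ f i
          * (((List.range (m-i)).map fun a => (tt (i+1+a) : B m) ^ f (i+1+a)).prod)) := by
  have h := mono_update2 (m := m) f i hi him (f i) 0
  rw [Function.update_eq_self, show Function.update f (i-1) 0 = f from by
        rw [← hfim, Function.update_eq_self]] at h
  rw [h, zpow_zero, one_mul]

/- ## the gap-free case -/
lemma nogap_mem (f : ℕ → ℤ)
    (hdc : ∀ a b : ℕ, a ≤ b → b ≤ m → f b ≠ 0 → f a ≠ 0)
    (β : H m) (hβ : β ∈ HA m) : pih m (mono m f) * β ∈ Ss m := by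
  classical
  have hex : ∃ ℓ, ∀ b, ℓ ≤ b → b ≤ m → f b = 0 := ⟨m+1, fun b hb hbm => by omega⟩
  set ℓ := Nat.find hex with hℓ
  have hspec := Nat.find_spec hex
  have hℓm : ℓ ≤ m + 1 := Nat.find_le (fun b hb hbm => by omega)
  have hnz : ∀ j, j < ℓ → f j ≠ 0 := by
    intro j hj hfj0
    have hP : ∀ b, j ≤ b → b ≤ m → f b = 0 := fun b hjb hbm => by
      by_contra hne
      exact (hdc j b hjb hbm hne) hfj0
    have := Nat.find_min' hex hP
    omega
  have h1 : mono m f = augWord ℓ (fun j : Fin ℓ => f (j : ℕ)) := by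
    rw [mono, prod_trunc _ (m+1) ℓ hℓm (fun a hla ham => by
      rw [hspec a hla (by omega), zpow_zero]), augWord,
      ofFn_eq_range_map (fun a => (tt a : B m) ^ f a) ℓ]
  rw [h1]
  exact aug_mem ℓ _ β hℓm (fun j => hnz j j.2) hβ

end Mono

/- ## main induction -/
section MainInd
variable {m : ℕ}

lemma main_induction (m : ℕ) : ∀ (μ : ℕ) (f : ℕ → ℤ), meas m f ≤ μ →
    ∀ β ∈ HA m, pih m (mono m f) * β ∈ Ss m := by
  intro μ
  induction μ with
  | zero =>
    intro f hf β hβ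
    apply nogap_mem f _ β hβ
    intro a b hab hbm hfb
    exfalso
    have h0 : meas m f = 0 := Nat.le_zero.mp hf
    have h1 : (f b).natAbs * (b+1) = 0 :=
      Finset.sum_eq_zero_iff.mp h0 b (Finset.mem_range.mpr (by omega))
    have h2 : (f b).natAbs = 0 := by
      rcases Nat.mul_eq_zero.mp h1 with h | h
      · exact h
      · omega
    exact hfb (Int.natAbs_eq_zero.mp h2)
  | succ μ IH =>
    intro f hf β hβ
    by_cases hdc : ∀ a b : ℕ, a ≤ b → b ≤ m → f b ≠ 0 → f a ≠ 0
    · exact nogap_mem f hdc β hβ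
    · push_neg at hdc
      obtain ⟨a0, b0, hab0, hb0m, hfb0, hfa0⟩ := hdc
      have hex : ∃ b, b ≤ m ∧ f b ≠ 0 ∧ ∃ a, a < b ∧ f a = 0 := by
        refine ⟨b0, hb0m, hfb0, a0, ?_, hfa0⟩
        rcases Nat.lt_or_ge a0 b0 with h | h
        · exact h
        · exfalso
          have he : a0 = b0 := by omega
          rw [he] at hfa0; exact hfb0 hfa0
      classical
      set i := Nat.find hex with hidef
      obtain ⟨him, hfi, a1, ha1, hfa1⟩ := Nat.find_spec hex
      rw [← hidef] at him hfi ha1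
      have hi1 : 1 ≤ i := by omega
      have hfim : f (i-1) = 0 := by
        by_contra hne
        have hlt : i - 1 < i := by omega
        have ha1' : a1 < i - 1 := by
          rcases Nat.lt_or_ge a1 (i-1) with h | h
          · exact h
          · exfalso
            have he : a1 = i - 1 := by omega
            rw [he] at hfa1; exact hne hfa1
        exact Nat.find_min hex hlt ⟨by omega, hne, a1, ha1', hfa1⟩
      set P := (((List.range (i-1)).map fun a => (tt a : B m) ^ f a).prod) with hP
      set Q := (((List.range (m-i)).map fun a => (tt (i+1+a) : B m) ^ f (i+1+a)).prod) with hQ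
      have hmf : mono m f = P * ((tt i : B m) ^ f i * Q) := mono_eq_self f i hi1 him hfim
      have hsP : Commute (sig i : B m) P := by
        apply Commute.list_prod_right
        intro x hx
        simp only [List.mem_map, List.mem_range] at hx
        obtain ⟨a, ha, rfl⟩ := hx
        exact (sig_tt_comm a (by omega) i hi1 (Or.inr (by omega))).zpow_right _
      have hsQ : Commute (sig i : B m) Q := by
        apply Commute.list_prod_right
        intro x hx
        simp only [List.mem_map, List.mem_range] at hx
        obtain ⟨a, ha, rfl⟩ := hx
        exact (sig_tt_comm (i+1+a) (by omega) i hi1 (Or.inl (by omega))).zpow_right _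
      have hXY : Commute (tt i : B m) (tt (i-1)) := tt_comm i (i-1) him (by omega)
      have hei : i - 1 + 1 = i := by omega
      have hXdef : (tt i : B m) = sig i * tt (i-1) * sig i := by
        calc (tt i : B m) = tt (i-1+1) := by rw [hei]
          _ = sig (i-1+1) * tt (i-1) * sig (i-1+1) := rfl
          _ = sig i * tt (i-1) * sig i := by rw [hei]
      obtain ⟨n', hn'⟩ : ∃ n', (f i).natAbs = n' + 1 := ⟨(f i).natAbs - 1, by
        have := Int.natAbs_pos.mpr hfi; omega⟩
      rw [hmf]
      rcases Int.natAbs_eq (f i) with hpos | hneg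
      · -- positive exponent
        rw [hpos, hn', zpow_natCast]
        refine step m (sig i) (tt i) (tt (i-1)) P Q (qq - 1) qq n' hXdef
          (quad_sig hi1 him) hsP hsQ hXY (sig_mem i) ?_ ?_ β hβ
        · intro β' hβ'
          have h2 := mono_update2 (m := m) f i hi1 him 0 ((n'+1 : ℕ) : ℤ)
          rw [zpow_zero, one_mul, zpow_natCast, ← hP, ← hQ] at h2
          rw [← h2]
          apply IH _ _ β' hβ'
          have m2 := meas_update (m := m) f i 0 (by omega)
          have m1 := meas_update (m := m) (Function.update f i 0) (i-1) ((n'+1 : ℕ) : ℤ) (by omega)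
          rw [Function.update_of_ne (by omega : i - 1 ≠ i), hfim] at m1
          simp only [Int.natAbs_zero, Int.natAbs_natCast, zero_mul, add_zero, zero_add] at m1 m2
          rw [hn'] at m2
          rw [show (n'+1) * (i-1+1) = (n'+1) * i from by rw [hei]] at m1
          rw [show (n'+1) * (i+1) = (n'+1) * i + (n'+1) from by ring] at m2
          linarith
        · intro a b habn ha1' hb1' β' hβ'
          have h2 := mono_update2 (m := m) f i hi1 him ((a : ℕ) : ℤ) ((b : ℕ) : ℤ)
          rw [zpow_natCast, zpow_natCast, ← hP, ← hQ] at h2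
          rw [← h2]
          apply IH _ _ β' hβ'
          have m2 := meas_update (m := m) f i ((a : ℕ) : ℤ) (by omega)
          have m1 := meas_update (m := m) (Function.update f i ((a : ℕ) : ℤ)) (i-1)
            ((b : ℕ) : ℤ) (by omega)
          rw [Function.update_of_ne (by omega : i - 1 ≠ i), hfim] at m1
          simp only [Int.natAbs_zero, Int.natAbs_natCast, zero_mul, add_zero, zero_add] at m1 m2
          rw [hn'] at m2
          rw [show b * (i-1+1) = b * i from by rw [hei]] at m1
          rw [show (n'+1) * (i+1) = a * (i+1) + b * i + b from by
            rw [← habn]; ring] at m2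
          linarith
      · -- negative exponent
        rw [hneg, hn', zpow_neg, zpow_natCast, ← inv_pow]
        refine step m ((sig i)⁻¹) ((tt i)⁻¹) ((tt (i-1))⁻¹) P Q (qi - 1) qi n' ?_
          (quad_sig_inv hi1 him) hsP.inv_left hsQ.inv_left (hXY.inv_left.inv_right)
          (sig_inv_mem hi1 him) ?_ ?_ β hβ
        · rw [hXdef]; simp only [mul_inv_rev, mul_assoc]
        · intro β' hβ'
          have h2 := mono_update2 (m := m) f i hi1 him 0 (-((n'+1 : ℕ) : ℤ))
          rw [zpow_zero, one_mul, zpow_neg, zpow_natCast, ← inv_pow, ← hP, ← hQ] at h2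
          rw [← h2]
          apply IH _ _ β' hβ'
          have m2 := meas_update (m := m) f i 0 (by omega)
          have m1 := meas_update (m := m) (Function.update f i 0) (i-1)
            (-((n'+1 : ℕ) : ℤ)) (by omega)
          rw [Function.update_of_ne (by omega : i - 1 ≠ i), hfim] at m1
          simp only [Int.natAbs_zero, Int.natAbs_neg, Int.natAbs_natCast, zero_mul,
            add_zero, zero_add] at m1 m2
          rw [hn'] at m2
          rw [show (n'+1) * (i-1+1) = (n'+1) * i from by rw [hei]] at m1
          rw [show (n'+1) * (i+1) = (n'+1) * i + (n'+1) from by ring] at m2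
          linarith
        · intro a b habn ha1' hb1' β' hβ'
          have h2 := mono_update2 (m := m) f i hi1 him (-((a : ℕ) : ℤ)) (-((b : ℕ) : ℤ))
          rw [zpow_neg, zpow_natCast, ← inv_pow, zpow_neg, zpow_natCast, ← inv_pow,
            ← hP, ← hQ] at h2
          rw [← h2]
          apply IH _ _ β' hβ'
          have m2 := meas_update (m := m) f i (-((a : ℕ) : ℤ)) (by omega)
          have m1 := meas_update (m := m) (Function.update f i (-((a : ℕ) : ℤ))) (i-1)
            (-((b : ℕ) : ℤ)) (by omega)
          rw [Function.update_of_ne (by omega : i - 1 ≠ i), hfim] at m1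
          simp only [Int.natAbs_zero, Int.natAbs_neg, Int.natAbs_natCast, zero_mul,
            add_zero, zero_add] at m1 m2
          rw [hn'] at m2
          rw [show b * (i-1+1) = b * i from by rw [hei]] at m1
          rw [show (n'+1) * (i+1) = a * (i+1) + b * i + b from by
            rw [← habn]; ring] at m2
          linarith

end MainInd


/- ## conversion from Fin-indexed monomials -/
lemma conv_lemma (m : ℕ) : ∀ (n : ℕ) (r : ℕ) (ind : Fin r → ℕ) (ke : Fin r → ℤ),
    StrictMono ind → (∀ j, ind j < n) →
    ((List.range n).map fun a => (tt a : B m) ^ (∑ j, if ind j = a then ke j else 0)).prod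
      = (List.ofFn fun j => (tt (ind j) : B m) ^ ke j).prod := by
  intro n
  induction n with
  | zero =>
    intro r ind ke hmono hlt
    match r with
    | 0 => simp
    | (r+1) => exact absurd (hlt 0) (by omega)
  | succ n IH =>
    intro r ind ke hmono hlt
    rw [List.range_succ, List.map_append, List.prod_append]
    by_cases hc : ∃ j, ind j = n
    · obtain ⟨j0, hj0⟩ := hc
      have hr : r ≠ 0 := by rintro rfl; exact j0.elim0
      obtain ⟨r', rfl⟩ : ∃ r', r = r' + 1 := ⟨r - 1, by omega⟩
      have hj0last : j0 = Fin.last r' := by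
        apply Fin.ext
        by_contra hne
        have hlt2 : j0 < Fin.last r' := by
          rw [Fin.lt_def, Fin.val_last]
          simp only [Fin.val_last] at hne
          have := j0.isLt; omega
        have h1 := hmono hlt2
        have h2 := hlt (Fin.last r')
        omega
      rw [hj0last] at hj0
      have hltc : ∀ j : Fin r', ind j.castSucc < n := by
        intro j
        have h1 := hmono (Fin.castSucc_lt_last j)
        rw [hj0] at h1
        exact h1
      have hfn : (∑ j : Fin (r'+1), if ind j = n then ke j else 0) = ke (Fin.last r') := by
        rw [Fin.sum_univ_castSucc,
          Finset.sum_congr rfl (fun (j : Fin r') _ => if_neg (by have := hltc j; omega))]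
        simp [hj0]
      have hmapc : ((List.range n).map fun a =>
            (tt a : B m) ^ (∑ j : Fin (r'+1), if ind j = a then ke j else 0))
          = ((List.range n).map fun a =>
            (tt a : B m) ^ (∑ j : Fin r', if ind j.castSucc = a then ke j.castSucc else 0)) := by
        apply List.map_congr_left
        intro a ha
        have han : a < n := List.mem_range.mp ha
        congr 1
        rw [Fin.sum_univ_castSucc, if_neg (by rw [hj0]; omega), add_zero]
      rw [hmapc, IH r' (fun j => ind j.castSucc) (fun j => ke j.castSucc)
            (fun a b hab => hmono (Fin.castSucc_lt_castSucc_iff.mpr hab)) hltc]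
      rw [show (List.ofFn fun j : Fin (r'+1) => (tt (ind j) : B m) ^ ke j)
            = (List.ofFn fun j : Fin r' => (tt (ind j.castSucc) : B m) ^ ke j.castSucc).concat
              ((tt (ind (Fin.last r')) : B m) ^ ke (Fin.last r'))
          from List.ofFn_succ' _, List.prod_concat]
      simp [hfn, hj0]
    · push_neg at hc
      have hfn0 : (∑ j : Fin r, if ind j = n then ke j else 0) = 0 :=
        Finset.sum_eq_zero (fun j _ => if_neg (hc j))
      simp only [List.map_cons, List.map_nil, List.prod_cons, List.prod_nil, hfn0,
        zpow_zero, mul_one]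
      exact IH r ind ke hmono (fun j => by have h1 := hlt j; have h2 := hc j; omega)

/-- **managing the gaps.** Every monomial `τ = t_{i_1}^{k_1}⋯t_{i_r}^{k_r}`
(possibly with gaps in the indices) satisfies `τ ≐ Σ_i τ_i β_i` with `τ_i ∈ Λ^{aug}` and
`β_i ∈ H_n(q)`, where `≐` is equality up to the span of commutators. -/
theorem manage_gaps (m : ℕ) (r : ℕ) (ind : Fin r → ℕ) (ke : Fin r → ℤ)
    (hmono : StrictMono ind) (hbdd : ∀ j, ind j ≤ m) (hnz : ∀ j, ke j ≠ 0) :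
    ∃ (N : ℕ) (ℓ : Fin N → ℕ) (k : ∀ i, Fin (ℓ i) → ℤ) (β : Fin N → H m),
      (∀ i, ℓ i ≤ m + 1) ∧ (∀ i j, k i j ≠ 0) ∧ (∀ i, β i ∈ HA m) ∧
      pih m ((List.ofFn fun j => tt (ind j) ^ ke j).prod) -
          (∑ i, pih m (augWord (ℓ i) (k i)) * β i) ∈
        Submodule.span R {x : H m | ∃ a b : H m, x = a * b - b * a} := by
  classical
  set f : ℕ → ℤ := fun a => ∑ j, if ind j = a then ke j else 0 with hfdef
  have hconv : mono m f = (List.ofFn fun j => tt (ind j) ^ ke j).prod :=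
    conv_lemma m (m+1) r ind ke hmono (fun j => by have := hbdd j; omega)
  have hmem := main_induction m (meas m f) f le_rfl 1 (one_mem _)
  rw [mul_one, hconv] at hmem
  obtain ⟨y, hy, z, hz, hyz⟩ := Submodule.mem_sup.mp hmem
  obtain ⟨N, co, gg, hsum⟩ := Submodule.mem_span_set'.mp hz
  choose ℓf kf βf hprop using fun i : Fin N => (gg i).2
  refine ⟨N, ℓf, fun i => kf i, fun i => co i • βf i,
    fun i => (hprop i).1.1, fun i j => (hprop i).1.2.1 j,
    fun i => Subalgebra.smul_mem _ (hprop i).1.2.2 _, ?_⟩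
  have hz' : ∑ i, pih m (augWord (ℓf i) (kf i)) * (co i • βf i) = z := by
    rw [← hsum]
    apply Finset.sum_congr rfl
    intro i _
    rw [mul_smul_comm, ← (hprop i).2]
  rw [hz', ← hyz]
  have e : y + z - z = y := by abel
  rw [e]
  exact hy

end MB
end

section
/- Let tr be the Markov trace. For every integer k ≥ 1, the following identity holds: tr(π(t_1^k)) = (q−1)^2 · Σ_{j=0}^{k−2} Σ_{φ=0}^{k−2−j} q^{j+φ} · tr(π(t^{j+1+φ} t_1^{k−1−j−φ})) + k(q−1) q^{k−1} z · tr(π(t^k)) + q^k · tr(π(t^k)), where t, t_1 ∈ B_{1,2}. -/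
set_option synthInstance.maxHeartbeats 1000000
set_option maxHeartbeats 2000000

namespace MB

/-! ## The trace field `F` -/

/-- Polynomials over `R` in the variables `z` (= `X none`) and `s_k`, `k ∈ ℤ` (= `X (some k)`). -/
abbrev P : Type := MvPolynomial (Option ℤ) R

/-- The field of fractions `F` of `P`. -/
abbrev F : Type := FractionRing P

/-- The variable `z ∈ F`. -/
noncomputable def zF : F := algebraMap P F (MvPolynomial.X none)

/-- The variable `s_k ∈ F`, for `k ∈ ℤ`. -/
noncomputable def sF (k : ℤ) : F := algebraMap P F (MvPolynomial.X (some k))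

/-- The image of `q` in `F`. -/
noncomputable def qF : F := algebraMap R F qq

/-! ## The natural inclusions and the Markov trace -/

/-- `ι : B_{1,n} → B_{1,n+1}` is the natural inclusion: it sends `t ↦ t` and `σ_i ↦ σ_i`. -/
def IsGrpIncl {m : ℕ} (ι : B m →* B (m+1)) : Prop :=
  ι τ = τ ∧ ∀ i : Fin m, ι (σ i) = σ i.castSucc

/-- `f : H_{1,n}(q) → H_{1,n+1}(q)` is the natural inclusion: it is induced by the natural
inclusion `B_{1,n} → B_{1,n+1}`. -/
def IsInclusion {m : ℕ} (f : H m →ₐ[R] H (m+1)) : Prop :=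
  ∃ ι : B m →* B (m+1), IsGrpIncl ι ∧ ∀ x : B m, f (pih m x) = pih (m+1) (ι x)

/-- The Markov trace rules for a family of `R`-linear maps `tr : H_{1,n}(q) → F`:
compatibility with the natural inclusions, `tr(ab) = tr(ba)`, `tr(1) = 1`,
`tr(a g_n) = z·tr(a)` and `tr(a (t′_n)^k) = s_k·tr(a)`. -/
structure IsMarkovTrace (tr : ∀ m, H m →ₗ[R] F) : Prop where
  compat : ∀ (m : ℕ) (f : H m →ₐ[R] H (m+1)), IsInclusion f →
    ∀ a : H m, tr (m+1) (f a) = tr m a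
  trace_comm : ∀ (m : ℕ) (a b : H m), tr m (a * b) = tr m (b * a)
  trace_one : ∀ m : ℕ, tr m 1 = 1
  markov : ∀ (m : ℕ) (f : H m →ₐ[R] H (m+1)), IsInclusion f → ∀ a : H m,
    tr (m+1) (f a * pih (m+1) (σ (Fin.last m))) = zF * tr m a
  loop_rule : ∀ (m : ℕ) (f : H m →ₐ[R] H (m+1)), IsInclusion f → ∀ (a : H m) (k : ℤ),
    tr (m+1) (f a * pih (m+1) (tp (m+1) ^ k)) = sF k * tr m a

end MB

/-!
Write `g = π(σ₁)` and `T = π(t)`, so that `π(t₁) = gTg =: U`. The quadratic relation gives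
`gU = (q-1)U + q Tg` and `Ug = (q-1)U + q gT`, hence closed expansions of `gUʲ` and `Uʲg`.
Now `tr(Uᵏ) = tr(gT · gUᵏ⁻¹)`: expanding `gUᵏ⁻¹`, moving `g` to the right by cyclicity and
expanding `Uʲg` leaves only terms `tr(TᵃUᵇ)`, `tr(Tᵃg) = z tr(Tᵃ)` and `tr(gTᵏg) = tr(Tᵏg²)`.
The Markov rule `tr(Tᵃg) = z tr(Tᵃ)` comes from the inclusion `H_{1,1}(q) ⊂ H_{1,2}(q)`.
-/

open Finset

section SandwichPow

variable {S A : Type*} [CommRing S] [Ring A] [Algebra S A] {q : S} {g : A}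

theorem mul_sandwich_pow_of_sq_eq (hg : g * g = (q - 1) • g + q • 1) (T : A) (j : ℕ) :
    g * (g * T * g) ^ j =
      ∑ i ∈ range j, ((q - 1) * q ^ i) • (T ^ i * (g * T * g) ^ (j - i)) +
        q ^ j • (T ^ j * g) := by
  induction j with
  | zero => simp
  | succ n ih =>
    have hgU : g * (g * T * g) = (q - 1) • (g * T * g) + q • (T * g) := by
      rw [← mul_assoc, ← mul_assoc, hg]
      simp [add_mul, mul_assoc]
    calc g * (g * T * g) ^ (n + 1)
        = (q - 1) • (g * T * g) ^ (n + 1) + q • (T * (g * (g * T * g) ^ n)) := by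
          rw [pow_succ', ← mul_assoc, hgU]
          simp only [add_mul, smul_mul_assoc, mul_assoc]
      _ = _ := by
          rw [ih, sum_range_succ', mul_add, mul_sum, smul_add, smul_sum]
          simp only [mul_smul_comm, smul_smul, ← mul_assoc, ← pow_succ', Nat.add_sub_add_right]
          simp only [pow_zero, mul_one, one_mul, Nat.sub_zero, pow_succ' q, mul_assoc,
            mul_left_comm (q - 1) q]
          abel

theorem sandwich_pow_mul_of_sq_eq (hg : g * g = (q - 1) • g + q • 1) (T : A) (j : ℕ) :
    (g * T * g) ^ j * g =
      ∑ p ∈ range j, ((q - 1) * q ^ p) • ((g * T * g) ^ (j - p) * T ^ p) +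
        q ^ j • (g * T ^ j) := by
  induction j with
  | zero => simp
  | succ n ih =>
    have hUg : (g * T * g) * g = (q - 1) • (g * T * g) + q • (g * T) := by
      rw [mul_assoc _ g g, hg]
      simp [mul_add]
    calc (g * T * g) ^ (n + 1) * g
        = (q - 1) • (g * T * g) ^ (n + 1) + q • ((g * T * g) ^ n * g * T) := by
          rw [pow_succ, mul_assoc, hUg]
          simp only [mul_add, mul_smul_comm, mul_assoc]
      _ = _ := by
          rw [ih, sum_range_succ', add_mul, sum_mul, smul_add, smul_sum]
          simp only [smul_mul_assoc, smul_smul, mul_assoc, ← pow_succ, Nat.add_sub_add_right]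
          simp only [pow_zero, mul_one, Nat.sub_zero, pow_succ' q, mul_left_comm (q - 1) q]
          abel

end SandwichPow

section Trace

variable {S A K : Type*} [CommRing S] [Ring A] [Algebra S A] [CommRing K] [Algebra S K]
  {q : S} {g T : A} {tr : A →ₗ[S] K} {z : K}

theorem trace_mul_pow_mul_of_sq_eq (hg : g * g = (q - 1) • g + q • 1)
    (htr : ∀ a b, tr (a * b) = tr (b * a)) (hz : ∀ n : ℕ, tr (T ^ n * g) = z * tr (T ^ n))
    (a : ℕ) :
    tr (g * T ^ a * g) =
      (algebraMap S K q - 1) * z * tr (T ^ a) + algebraMap S K q * tr (T ^ a) := by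
  rw [mul_assoc, htr g, mul_assoc, hg, mul_add, mul_smul_comm, mul_smul_comm, mul_one, map_add,
    map_smul, map_smul, hz, Algebra.smul_def, Algebra.smul_def, map_sub, map_one, mul_assoc]

theorem trace_pow_mul_sandwich_pow_mul_of_sq_eq (hg : g * g = (q - 1) • g + q • 1)
    (htr : ∀ a b, tr (a * b) = tr (b * a)) (hz : ∀ n : ℕ, tr (T ^ n * g) = z * tr (T ^ n))
    (a j : ℕ) :
    tr (T ^ a * (g * T * g) ^ j * g) =
      ∑ p ∈ range j, (algebraMap S K q - 1) * algebraMap S K q ^ p *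
          tr (T ^ (a + p) * (g * T * g) ^ (j - p)) +
        algebraMap S K q ^ j * z * tr (T ^ (a + j)) := by
  rw [mul_assoc, sandwich_pow_mul_of_sq_eq hg, mul_add, mul_sum, map_add, map_sum]
  congr 1
  · refine sum_congr rfl fun p _ => ?_
    rw [mul_smul_comm, map_smul, Algebra.smul_def, ← mul_assoc, htr _ (T ^ p), ← mul_assoc,
      ← pow_add, add_comm p a]
    simp only [map_mul, map_sub, map_one, map_pow]
  · rw [mul_smul_comm, map_smul, Algebra.smul_def, htr (T ^ a), mul_assoc, ← pow_add, htr g, hz,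
      add_comm j a, map_pow, mul_assoc]

theorem trace_sandwich_pow_succ_of_sq_eq (hg : g * g = (q - 1) • g + q • 1)
    (htr : ∀ a b, tr (a * b) = tr (b * a)) (hz : ∀ n : ℕ, tr (T ^ n * g) = z * tr (T ^ n))
    (n : ℕ) :
    tr ((g * T * g) ^ (n + 1)) =
      ∑ i ∈ range n, (algebraMap S K q - 1) * algebraMap S K q ^ i *
          (∑ p ∈ range (n - i), (algebraMap S K q - 1) * algebraMap S K q ^ p *
              tr (T ^ (i + 1 + p) * (g * T * g) ^ (n - i - p)) +
            algebraMap S K q ^ (n - i) * z * tr (T ^ (n + 1))) +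
        algebraMap S K q ^ n *
          ((algebraMap S K q - 1) * z * tr (T ^ (n + 1)) +
            algebraMap S K q * tr (T ^ (n + 1))) := by
  have hterm : ∀ i ∈ range n, tr (g * T * (T ^ i * (g * T * g) ^ (n - i))) =
      ∑ p ∈ range (n - i), (algebraMap S K q - 1) * algebraMap S K q ^ p *
          tr (T ^ (i + 1 + p) * (g * T * g) ^ (n - i - p)) +
        algebraMap S K q ^ (n - i) * z * tr (T ^ (n + 1)) := by
    intro i hi
    have hin : i + 1 + (n - i) = n + 1 := by
      have := mem_range.mp hi
      omega
    rw [← mul_assoc, mul_assoc g, ← pow_succ', mul_assoc, htr g,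
      trace_pow_mul_sandwich_pow_mul_of_sq_eq hg htr hz, hin]
  have hlast : tr (g * T * (T ^ n * g)) = (algebraMap S K q - 1) * z * tr (T ^ (n + 1)) +
      algebraMap S K q * tr (T ^ (n + 1)) := by
    rw [← mul_assoc, mul_assoc g, ← pow_succ', trace_mul_pow_mul_of_sq_eq hg htr hz]
  rw [pow_succ', mul_assoc (g * T), mul_sandwich_pow_of_sq_eq hg, mul_add, mul_sum, map_add,
    map_sum, mul_smul_comm, map_smul, hlast]
  simp only [mul_smul_comm, map_smul]
  simp only [Algebra.smul_def, map_mul, map_sub, map_one, map_pow]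
  rw [sum_congr rfl fun i hi => by rw [hterm i hi]]

theorem trace_sandwich_pow_of_sq_eq (hg : g * g = (q - 1) • g + q • 1)
    (htr : ∀ a b, tr (a * b) = tr (b * a)) (hz : ∀ n : ℕ, tr (T ^ n * g) = z * tr (T ^ n))
    (k : ℕ) :
    tr ((g * T * g) ^ k) =
      (algebraMap S K q - 1) ^ 2 *
          (∑ j ∈ range (k - 1), ∑ f ∈ range (k - 1 - j),
            algebraMap S K q ^ (j + f) * tr (T ^ (j + 1 + f) * (g * T * g) ^ (k - 1 - j - f))) +
        (k : K) * (algebraMap S K q - 1) * algebraMap S K q ^ (k - 1) * z * tr (T ^ k) +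
        algebraMap S K q ^ k * tr (T ^ k) := by
  cases k with
  | zero => simp
  | succ n =>
    rw [trace_sandwich_pow_succ_of_sq_eq hg htr hz, Nat.add_sub_cancel]
    set Q := algebraMap S K q
    have hsummand : ∀ i ∈ range n,
        (Q - 1) * Q ^ i * (∑ p ∈ range (n - i), (Q - 1) * Q ^ p *
            tr (T ^ (i + 1 + p) * (g * T * g) ^ (n - i - p)) + Q ^ (n - i) * z * tr (T ^ (n + 1))) =
          (Q - 1) ^ 2 * ∑ p ∈ range (n - i), Q ^ (i + p) *
              tr (T ^ (i + 1 + p) * (g * T * g) ^ (n - i - p)) +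
            (Q - 1) * Q ^ n * z * tr (T ^ (n + 1)) := by
      intro i hi
      have hpow : Q ^ n = Q ^ i * Q ^ (n - i) := by
        rw [← pow_add, Nat.add_sub_cancel' (mem_range.mp hi).le]
      rw [mul_add, mul_sum, mul_sum, hpow]
      congr 1
      · exact sum_congr rfl fun p _ => by ring
      · ring
    rw [sum_congr rfl hsummand, sum_add_distrib, ← mul_sum, sum_const, card_range, nsmul_eq_mul]
    push_cast
    ring

end Trace

namespace MB

theorem pih_apply {m : ℕ} (x : B m) :
    pih m x = RingQuot.mkAlgHom R (heckeRel m) (MonoidAlgebra.of R (B m) x) := by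
  rw [← AlgHom.coe_toRingHom, RingQuot.mkAlgHom_coe]
  rfl

theorem pih_sigma_mul_self {m : ℕ} (i : Fin m) :
    pih m (σ i) * pih m (σ i) = (qq - 1) • pih m (σ i) + qq • 1 := by
  simpa only [pih_apply, map_mul, map_add, map_smul, map_one] using
    RingQuot.mkAlgHom_rel R (heckeRel.quad i)

theorem tt_one : (tt 1 : B 1) = σ 0 * τ * σ 0 := rfl

noncomputable def heckeInclusion {m : ℕ} (ι : B m →* B (m + 1)) (hι : IsGrpIncl ι) :
    H m →ₐ[R] H (m + 1) :=
  RingQuot.liftAlgHom R ⟨(RingQuot.mkAlgHom R (heckeRel (m + 1))).comp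
      (MonoidAlgebra.mapDomainAlgHom R R ι), by
    rintro _ _ ⟨i⟩
    simpa only [AlgHom.comp_apply, map_mul, map_add, map_smul, map_one,
      MonoidAlgebra.mapDomainAlgHom_apply, MonoidAlgebra.of_apply, MonoidAlgebra.mapDomain_single,
      hι.2 i] using RingQuot.mkAlgHom_rel R (heckeRel.quad i.castSucc)⟩

theorem heckeInclusion_pih {m : ℕ} (ι : B m →* B (m + 1)) (hι : IsGrpIncl ι) (x : B m) :
    heckeInclusion ι hι (pih m x) = pih (m + 1) (ι x) := by
  rw [pih_apply, heckeInclusion, RingQuot.liftAlgHom_mkAlgHom_apply, AlgHom.comp_apply,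
    MonoidAlgebra.mapDomainAlgHom_apply, MonoidAlgebra.of_apply, MonoidAlgebra.mapDomain_single,
    pih_apply, MonoidAlgebra.of_apply]

theorem isInclusion_heckeInclusion {m : ℕ} (ι : B m →* B (m + 1)) (hι : IsGrpIncl ι) :
    IsInclusion (heckeInclusion ι hι) :=
  ⟨ι, hι, heckeInclusion_pih ι hι⟩

/-- `B 0` is generated by `t` alone (`Fin 0` is empty) and has no relations. -/
def loopInclusion : B 0 →* B 1 :=
  PresentedGroup.toGroup (f := fun _ => τ) <| by
    rintro r (⟨h, -⟩ | ⟨i, -⟩ | ⟨i, -⟩ | ⟨i, -⟩)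
    · exact absurd h (lt_irrefl 0)
    all_goals exact i.elim0

theorem isGrpIncl_loopInclusion : IsGrpIncl loopInclusion :=
  ⟨PresentedGroup.toGroup.of _, fun i => i.elim0⟩

theorem IsMarkovTrace.trace_loop_pow_mul_sigma {tr : ∀ m, H m →ₗ[R] F} (htr : IsMarkovTrace tr)
    (n : ℕ) : tr 1 (pih 1 τ ^ n * pih 1 (σ 0)) = zF * tr 1 (pih 1 τ ^ n) := by
  have hf := isInclusion_heckeInclusion loopInclusion isGrpIncl_loopInclusion
  have h := htr.markov 0 _ hf (pih 0 (τ ^ n))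
  rwa [← htr.compat 0 _ hf, heckeInclusion_pih, map_pow, isGrpIncl_loopInclusion.1, map_pow] at h

theorem trace_of_t1_power_general (tr : ∀ m, H m →ₗ[R] F) (htr : IsMarkovTrace tr)
    (k : ℕ) :
    tr 1 (pih 1 (tt 1 ^ (k : ℤ))) =
      (qF - 1) ^ 2 *
          (∑ j ∈ Finset.range (k-1), ∑ f ∈ Finset.range (k-1-j),
            qF ^ (j + f) *
              tr 1 (pih 1 (tt 0 ^ ((j : ℤ) + 1 + (f : ℤ)) *
                tt 1 ^ ((k : ℤ) - 1 - (j : ℤ) - (f : ℤ))))) +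
        (k : F) * (qF - 1) * qF ^ (k-1) * zF * tr 1 (pih 1 (tt 0 ^ (k : ℤ))) +
        qF ^ k * tr 1 (pih 1 (tt 0 ^ (k : ℤ))) := by
  have hexp : ∀ j ∈ range (k - 1), ∀ f ∈ range (k - 1 - j),
      (tt 0 ^ ((j : ℤ) + 1 + f) * tt 1 ^ ((k : ℤ) - 1 - j - f) : B 1) =
        tt 0 ^ (j + 1 + f) * tt 1 ^ (k - 1 - j - f) := by
    intro j hj f hf
    have := mem_range.mp hj
    have := mem_range.mp hf
    rw [← zpow_natCast, ← zpow_natCast]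
    congr 2
    omega
  rw [sum_congr rfl fun j hj => sum_congr rfl fun f hf => by rw [hexp j hj f hf]]
  simp only [zpow_natCast, map_mul, map_pow, tt_one]
  exact trace_sandwich_pow_of_sq_eq (tr := tr 1) (T := pih 1 τ) (pih_sigma_mul_self 0)
    (htr.trace_comm 1) htr.trace_loop_pow_mul_sigma k

/-- For every `k ≥ 1`,
`tr(π(t_1^k)) = (q−1)²·Σ_{j=0}^{k−2}Σ_{φ=0}^{k−2−j} q^{j+φ}·tr(π(t^{j+1+φ}t_1^{k−1−j−φ}))
+ k(q−1)q^{k−1}z·tr(π(t^k)) + q^k·tr(π(t^k))`, where `t, t_1 ∈ B_{1,2}`. -/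
theorem trace_of_t1_power (tr : ∀ m, H m →ₗ[R] F) (htr : IsMarkovTrace tr)
    (k : ℕ) (hk : 1 ≤ k) :
    tr 1 (pih 1 (tt 1 ^ (k : ℤ))) =
      (qF - 1) ^ 2 *
          (∑ j ∈ Finset.range (k-1), ∑ f ∈ Finset.range (k-1-j),
            qF ^ (j + f) *
              tr 1 (pih 1 (tt 0 ^ ((j : ℤ) + 1 + (f : ℤ)) *
                tt 1 ^ ((k : ℤ) - 1 - (j : ℤ) - (f : ℤ))))) +
        (k : F) * (qF - 1) * qF ^ (k-1) * zF * tr 1 (pih 1 (tt 0 ^ (k : ℤ))) +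
        qF ^ k * tr 1 (pih 1 (tt 0 ^ (k : ℤ))) :=
  trace_of_t1_power_general tr htr k

end MB
end
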